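/- Fix an integer K ≥ 1 and for each integer x ≥ 1 set N₁ = 3, J = xK and N₂ = x²K. Then Q_N(𝐔_{K,3,x²K,xK}, G_{K,3,x²K}) ≥ 1 − x/(1 + x²K) − 2(3 + x²K)²/((1 + x²K)² x K), and consequently Q_N(𝐔_{K,3,x²K,xK}, G_{K,3,x²K}) → 1 as x → ∞. -/

import Mathlib

open scoped Classical

noncomputable section

namespace BadComm

variable {V : Type*} [Fintype V]

/-- The finset of edges of a simple graph `G`. -/
def edgeFin (G : SimpleGraph V) : Finset (Sym2 V) :=
  Finset.univ.filter (fun e => e ∈ G.edgeSet)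

/-- The number of edges `m` of `G`. -/
def numEdges (G : SimpleGraph V) : ℕ := (edgeFin G).card

/-- The degree of a node. -/
def deg (G : SimpleGraph V) (v : V) : ℕ := (Finset.univ.filter (fun w => G.Adj v w)).card

/-- A clustering is encoded as a labelling `c : V → ℕ`; cluster `k` is the set of nodes
with label `k`.  `clusterDeg G c k` is the total degree of cluster `k`. -/
def clusterDeg (G : SimpleGraph V) (c : V → ℕ) (k : ℕ) : ℕ :=
  ∑ v ∈ Finset.univ.filter (fun v => c v = k), deg G v

/-- An unordered pair is intracluster when all of its members carry the same label. -/
def sameCluster (c : V → ℕ) (p : Sym2 V) : Prop :=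
  ∀ u ∈ p, ∀ v ∈ p, c u = c v

/-- The number of intracluster edges, `∑ₖ |Eₖ|`. -/
def intraEdges (G : SimpleGraph V) (c : V → ℕ) : ℕ :=
  ((edgeFin G).filter (fun e => sameCluster c e)).card

/-- The number of extracluster edges. -/
def extraEdges (G : SimpleGraph V) (c : V → ℕ) : ℕ :=
  ((edgeFin G).filter (fun e => ¬ sameCluster c e)).card

/-- The intracluster edge fraction `Q_f = (∑ₖ |Eₖ|)/m`. -/
def Qf (G : SimpleGraph V) (c : V → ℕ) : ℝ := (intraEdges G c : ℝ) / (numEdges G : ℝ)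

/-- The null-model term `Q_0 = ∑ₖ (deg(Vₖ)/(2m))²` (summed over the nonempty clusters). -/
def Q0 (G : SimpleGraph V) (c : V → ℕ) : ℝ :=
  ∑ k ∈ Finset.univ.image c, ((clusterDeg G c k : ℝ) / (2 * (numEdges G : ℝ))) ^ 2

/-- Newman's modularity `Q_N = Q_f - Q_0`. -/
def QN (G : SimpleGraph V) (c : V → ℕ) : ℝ := Qf G c - Q0 G c

/-- The number of (nonempty) clusters of a labelling. -/
def numClusters (c : V → ℕ) : ℕ := (Finset.univ.image c).card

/-- The unordered pairs of distinct nodes. -/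
def offDiagPairs (V : Type*) [Fintype V] : Finset (Sym2 V) :=
  Finset.univ.filter (fun p => ¬ p.IsDiag)

/-- Number of node pairs in the same cluster under both clusterings. -/
def a11 (c1 c2 : V → ℕ) : ℕ :=
  ((offDiagPairs V).filter (fun p => sameCluster c1 p ∧ sameCluster c2 p)).card

/-- Number of node pairs in the same cluster under `c1` but not under `c2`. -/
def a10 (c1 c2 : V → ℕ) : ℕ :=
  ((offDiagPairs V).filter (fun p => sameCluster c1 p ∧ ¬ sameCluster c2 p)).card

/-- Number of node pairs in the same cluster under `c2` but not under `c1`. -/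
def a01 (c1 c2 : V → ℕ) : ℕ :=
  ((offDiagPairs V).filter (fun p => ¬ sameCluster c1 p ∧ sameCluster c2 p)).card

/-- The Jaccard similarity index of two clusterings. -/
def jaccard (c1 c2 : V → ℕ) : ℝ :=
  (a11 c1 c2 : ℝ) / ((a10 c1 c2 : ℝ) + (a01 c1 c2 : ℝ) + (a11 c1 c2 : ℝ))

/-- Number of (unordered) node pairs lying in the same cluster. -/
def samePairCount (c : V → ℕ) : ℕ :=
  ((offDiagPairs V).filter (fun p => sameCluster c p)).card

/-- The nodes `0,…,n-1` are split into consecutive blocks of alternating sizes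
`N₁,N₂,N₁,N₂,…`; `blockIdx N1 N2 v` is the index of the block of node `v`. -/
def blockIdx (N1 N2 v : ℕ) : ℕ :=
  2 * (v / (N1 + N2)) + (if v % (N1 + N2) < N1 then 0 else 1)

/-- The graph `G_{K,N₁,N₂}`: a disjoint union of `K` paths on `N₁` nodes and `K` paths on
`N₂` nodes, arranged as alternating consecutive blocks of `{0,…,K(N₁+N₂)-1}`. -/
def graphG (K N1 N2 : ℕ) : SimpleGraph (Fin (K * (N1 + N2))) where
  Adj u v := (u.val + 1 = v.val ∨ v.val + 1 = u.val) ∧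
             blockIdx N1 N2 u.val = blockIdx N1 N2 v.val
  symm := ⟨by rintro u v ⟨h1, h2⟩; exact ⟨h1.symm, h2.symm⟩⟩
  loopless := ⟨by rintro u ⟨h1 | h1, -⟩ <;> omega⟩

/-- The connected graph `H_{K,N₁,N₂}`: the path on all of `{0,…,K(N₁+N₂)-1}` together with,
inside each block, all chords joining nodes of the block at distance two. -/
def graphH (K N1 N2 : ℕ) : SimpleGraph (Fin (K * (N1 + N2))) where
  Adj u v := (u.val + 1 = v.val ∨ v.val + 1 = u.val) ∨
             ((u.val + 2 = v.val ∨ v.val + 2 = u.val) ∧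
              blockIdx N1 N2 u.val = blockIdx N1 N2 v.val)
  symm := by
    refine ⟨?_⟩
    rintro u v (h1 | ⟨h2, h3⟩)
    · exact Or.inl h1.symm
    · exact Or.inr ⟨h2.symm, h3.symm⟩
  loopless := ⟨by rintro u ((h | h) | ⟨h | h, -⟩) <;> omega⟩

/-- The natural clustering `𝐕_{K,N₁,N₂}`: the clusters are the `2K` blocks. -/
def naturalLabel (N1 N2 : ℕ) {n : ℕ} : Fin n → ℕ := fun v => blockIdx N1 N2 v.val

/-- The balanced clustering `𝐔_{K,N₁,N₂,J}` with `L = ⌊n/J⌋`: clusters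
`U_j = {(j-1)L+1,…,jL}` for `j = 1,…,J`, plus the remainder cluster `U_{J+1}`. -/
def uLabel (J : ℕ) {n : ℕ} : Fin n → ℕ := fun v => min (v.val / (n / J)) J

end BadComm

/-!
Every edge of `G_{K,3,x²K}` joins consecutive nodes and the clusters of `𝐔` are consecutive
intervals, so at most `J = xK` edges leave their cluster, while `G` has `m ≥ K(1 + x²K)`
edges: hence `Q_f ≥ 1 - xK/m`. Every cluster has at most `L = ⌊n/J⌋` nodes, each of degree
at most `2`, so `Q_0 ≤ max_k deg(U_k)/(2m) ≤ L/m`, and `xL ≤ 3 + x²K`.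
Both error terms are `O(1/x)`; together with `Q_N ≤ 1` this gives the limit.
-/

namespace BadComm

lemma sameCluster_mk {V : Type*} (c : V → ℕ) (a b : V) :
    sameCluster c s(a, b) ↔ c a = c b := by
  refine ⟨fun h => h a (Sym2.mem_mk_left a b) b (Sym2.mem_mk_right a b), fun h => ?_⟩
  intro u hu v hv
  rcases Sym2.mem_iff.mp hu with rfl | rfl <;> rcases Sym2.mem_iff.mp hv with rfl | rfl <;>
    simp [h]

section Modularity

variable {V : Type*} [Fintype V] (G : SimpleGraph V) (c : V → ℕ)

lemma sum_deg_eq_two_mul_numEdges : ∑ v, deg G v = 2 * numEdges G := by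
  have hdeg : ∀ v, deg G v = G.degree v := fun v => by
    rw [deg, ← SimpleGraph.card_neighborFinset_eq_degree]
    congr 1
    ext w
    simp
  have hedges : numEdges G = G.edgeFinset.card := by
    rw [numEdges, edgeFin]
    congr 1
    ext e
    simp
  simp only [hdeg, hedges, SimpleGraph.sum_degrees_eq_twice_card_edges]

lemma sum_clusterDeg : ∑ k ∈ Finset.univ.image c, clusterDeg G c k = 2 * numEdges G := by
  rw [← sum_deg_eq_two_mul_numEdges]
  exact Finset.sum_fiberwise_of_maps_to
    (fun v _ => Finset.mem_image_of_mem c (Finset.mem_univ v)) _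

lemma intraEdges_add_extraEdges : intraEdges G c + extraEdges G c = numEdges G :=
  Finset.card_filter_add_card_filter_not _

lemma QN_le_one : QN G c ≤ 1 := by
  have hQf : Qf G c ≤ 1 := div_le_one_of_le₀
    (by exact_mod_cast (intraEdges_add_extraEdges G c).symm ▸ Nat.le_add_right _ _)
    (Nat.cast_nonneg _)
  have hQ0 : 0 ≤ Q0 G c := Finset.sum_nonneg fun k _ => sq_nonneg _
  rw [QN]
  linarith

lemma Qf_eq_one_sub (hm : numEdges G ≠ 0) :
    Qf G c = 1 - (extraEdges G c : ℝ) / numEdges G := by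
  have hm' : (numEdges G : ℝ) ≠ 0 := by exact_mod_cast hm
  rw [Qf, eq_sub_iff_add_eq, ← add_div, div_eq_one_iff_eq hm']
  exact_mod_cast intraEdges_add_extraEdges G c

lemma Q0_le_of_clusterDeg_le {D : ℕ} (hD : ∀ k, clusterDeg G c k ≤ D) :
    Q0 G c ≤ D / (2 * numEdges G) := by
  set m2 : ℝ := 2 * numEdges G
  have hterm : ∀ k, ((clusterDeg G c k : ℝ) / m2) ^ 2 ≤ D / m2 * (clusterDeg G c k / m2) :=
    fun k => by
      rw [sq]
      gcongr
      exact_mod_cast hD k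
  calc Q0 G c ≤ ∑ k ∈ Finset.univ.image c, D / m2 * (clusterDeg G c k / m2) :=
        Finset.sum_le_sum fun k _ => hterm k
    _ = D / m2 * (m2 / m2) := by
        rw [← Finset.mul_sum, ← Finset.sum_div, ← Nat.cast_sum, sum_clusterDeg]
        push_cast
        rfl
    _ ≤ D / m2 := mul_le_of_le_one_right (by positivity) (div_self_le_one m2)

lemma one_sub_le_QN {E D : ℕ} (hm : numEdges G ≠ 0) (hE : extraEdges G c ≤ E)
    (hD : ∀ k, clusterDeg G c k ≤ D) :
    1 - (E : ℝ) / numEdges G - D / (2 * numEdges G) ≤ QN G c := by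
  have hE' : (extraEdges G c : ℝ) / numEdges G ≤ E / numEdges G := by gcongr
  rw [QN, Qf_eq_one_sub G c hm]
  linarith [Q0_le_of_clusterDeg_le G c hD]

end Modularity

section SubgraphOfPath

variable {n : ℕ} {G : SimpleGraph (Fin n)}

lemma deg_le_two_of_le_pathGraph (hG : G ≤ SimpleGraph.pathGraph n) (v : Fin n) :
    deg G v ≤ 2 := by
  refine (Finset.card_le_card_of_injOn (fun w : Fin n => w.val) ?_ Fin.val_injective.injOn).trans
    (Finset.card_le_two (a := v.val - 1) (b := v.val + 1))
  intro w hw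
  have hadj := SimpleGraph.pathGraph_adj.mp (hG (Finset.mem_filter.mp hw).2)
  simp only [Finset.coe_insert, Finset.coe_singleton, Set.mem_insert_iff, Set.mem_singleton_iff]
  omega

lemma exists_eq_mk_of_mem_edgeFin (hG : G ≤ SimpleGraph.pathGraph n) {e : Sym2 (Fin n)}
    (he : e ∈ edgeFin G) : ∃ a b : Fin n, e = s(a, b) ∧ a.val + 1 = b.val := by
  induction e using Sym2.ind with
  | _ a b =>
    have hadj := SimpleGraph.pathGraph_adj.mp (hG ((Finset.mem_filter.mp he).2))
    rcases hadj with h | h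
    · exact ⟨a, b, rfl, h⟩
    · exact ⟨b, a, Sym2.eq_swap, h⟩

/-- An intercluster edge `{a, a+1}` is determined by the label of `a`: by monotonicity, distinct
such edges have distinct labels at their lower ends. -/
lemma extraEdges_le_of_le_pathGraph (hG : G ≤ SimpleGraph.pathGraph n) {c : Fin n → ℕ}
    (hc : Monotone c) {J : ℕ} (hcJ : ∀ v, c v ≤ J) : extraEdges G c ≤ J := by
  have hcut : ∀ e ∈ (edgeFin G).filter (fun e => ¬ sameCluster c e),
      ∃ a b : Fin n, e = s(a, b) ∧ a.val + 1 = b.val ∧ c a < c b := by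
    intro e he
    obtain ⟨he, hcross⟩ := Finset.mem_filter.mp he
    obtain ⟨a, b, rfl, hab⟩ := exists_eq_mk_of_mem_edgeFin hG he
    rw [sameCluster_mk] at hcross
    exact ⟨a, b, rfl, hab, lt_of_le_of_ne (hc (Fin.le_iff_val_le_val.mpr (by omega))) hcross⟩
  have hinf : ∀ a b : Fin n, a.val + 1 = b.val → s(a, b).inf = a := fun a b h => by
    rw [Sym2.inf_mk, inf_eq_left, Fin.le_iff_val_le_val]
    omega
  rw [extraEdges, ← Finset.card_range J]
  refine Finset.card_le_card_of_injOn (fun e => c e.inf) ?_ ?_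
  · intro e he
    obtain ⟨a, b, rfl, hab, hlt⟩ := hcut e he
    simpa [hinf a b hab] using hlt.trans_le (hcJ b)
  · intro e₁ he₁ e₂ he₂ heq
    obtain ⟨a₁, b₁, rfl, hab₁, hlt₁⟩ := hcut e₁ he₁
    obtain ⟨a₂, b₂, rfl, hab₂, hlt₂⟩ := hcut e₂ he₂
    simp only [hinf a₁ b₁ hab₁, hinf a₂ b₂ hab₂] at heq
    have ha : a₁ = a₂ := by
      by_contra hne
      rcases Fin.lt_or_lt_of_ne hne with h | h
      · have := hc (Fin.le_iff_val_le_val.mpr (by omega) : b₁ ≤ a₂)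
        omega
      · have := hc (Fin.le_iff_val_le_val.mpr (by omega) : b₂ ≤ a₁)
        omega
    have hb : b₁ = b₂ := Fin.ext (by rw [← hab₁, ← hab₂, ha])
    rw [ha, hb]

lemma clusterDeg_le_of_le_pathGraph (hG : G ≤ SimpleGraph.pathGraph n) (c : Fin n → ℕ)
    (k : ℕ) :
    clusterDeg G c k ≤ 2 * (Finset.univ.filter (fun v => c v = k)).card := by
  rw [mul_comm]
  exact Finset.sum_le_card_nsmul _ _ _ fun v _ => deg_le_two_of_le_pathGraph hG v

end SubgraphOfPath

section BalancedClustering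

variable {n : ℕ}

lemma uLabel_monotone (J : ℕ) : Monotone (uLabel J : Fin n → ℕ) :=
  fun _ _ h => min_le_min (Nat.div_le_div_right h) le_rfl

lemma uLabel_le (J : ℕ) (v : Fin n) : uLabel J v ≤ J := min_le_right _ _

/-- `n % J` is the size of the remainder cluster `U_{J+1}`. -/
lemma card_uLabel_fiber_le {J : ℕ} (hrem : n % J ≤ n / J) (k : ℕ) :
    (Finset.univ.filter (fun v : Fin n => uLabel J v = k)).card ≤ n / J := by
  set L := n / J
  have hn : J * L + n % J = n := Nat.div_add_mod n J
  refine (Finset.card_le_card_of_injOn (fun v : Fin n => v.val) ?_ Fin.val_injective.injOn).trans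
    (by rw [Nat.card_Ico, Nat.add_sub_cancel_left] : (Finset.Ico (k * L) (k * L + L)).card ≤ L)
  intro v hv
  have hk : min (v.val / L) J = k := (Finset.mem_filter.mp hv).2
  have hL : 0 < L := by
    by_contra h0
    rw [Nat.eq_zero_of_not_pos h0, mul_zero] at hn
    have := v.isLt
    omega
  have hvL : v.val < v.val / L * L + L := Nat.lt_div_mul_add hL
  simp only [Finset.coe_Ico, Set.mem_Ico]
  rcases le_total (v.val / L) J with h | h
  · rw [min_eq_left h] at hk
    subst hk
    exact ⟨Nat.div_mul_le_self v.val L, hvL⟩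
  · rw [min_eq_right h] at hk
    subst hk
    have hJL : J * L ≤ v.val := (Nat.mul_le_mul_right L h).trans (Nat.div_mul_le_self v.val L)
    have := v.isLt
    omega

end BalancedClustering

section PathBlocks

lemma graphG_le_pathGraph (K N1 N2 : ℕ) :
    graphG K N1 N2 ≤ SimpleGraph.pathGraph (K * (N1 + N2)) :=
  fun _ _ h => SimpleGraph.pathGraph_adj.mpr h.1

lemma card_filter_mod_eq_le (K P r : ℕ) :
    ((Finset.range (K * P)).filter (fun v => v % P = r)).card ≤ K := by
  refine (Finset.card_le_card_of_injOn (· / P) ?_ ?_).trans (Finset.card_range K).le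
  · intro v hv
    simp only [Finset.coe_filter, Finset.mem_range, Set.mem_ofPred_eq] at hv
    simpa using Nat.div_lt_of_lt_mul (mul_comm K P ▸ hv.1)
  · intro a ha b hb hab
    simp only [Finset.coe_filter, Finset.mem_range, Set.mem_ofPred_eq] at ha hb
    rw [← Nat.div_add_mod a P, ← Nat.div_add_mod b P, ha.2, hb.2]
    exact congrArg (P * · + r) hab

lemma add_one_mod_of_mod_add_one_lt {v P : ℕ} (h : v % P + 1 < P) :
    (v + 1) % P = v % P + 1 := by
  rw [Nat.add_mod_of_add_mod_lt] <;> rw [Nat.mod_eq_of_lt (by omega : 1 < P)]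
  exact h

def IsBlockEnd (N1 N2 v : ℕ) : Prop :=
  v % (N1 + N2) + 1 = N1 ∨ v % (N1 + N2) + 1 = N1 + N2

lemma mod_add_one_lt_of_not_isBlockEnd {N1 N2 v : ℕ} (hP : 0 < N1 + N2)
    (h : ¬ IsBlockEnd N1 N2 v) : v % (N1 + N2) + 1 < N1 + N2 := by
  have := Nat.mod_lt v hP
  unfold IsBlockEnd at h
  omega

lemma blockIdx_add_one_of_not_isBlockEnd {N1 N2 v : ℕ} (hP : 0 < N1 + N2)
    (h : ¬ IsBlockEnd N1 N2 v) : blockIdx N1 N2 (v + 1) = blockIdx N1 N2 v := by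
  have hlt := mod_add_one_lt_of_not_isBlockEnd hP h
  have hmod := add_one_mod_of_mod_add_one_lt hlt
  have hdiv : (v + 1) / (N1 + N2) = v / (N1 + N2) :=
    Nat.succ_div_of_not_dvd (by rw [Nat.dvd_iff_mod_eq_zero, hmod]; omega)
  unfold blockIdx
  rw [hmod, hdiv]
  unfold IsBlockEnd at h
  split_ifs <;> omega

lemma add_one_lt_of_not_isBlockEnd {K N1 N2 v : ℕ} (hv : v < K * (N1 + N2))
    (h : ¬ IsBlockEnd N1 N2 v) : v + 1 < K * (N1 + N2) := by
  have hP : 0 < N1 + N2 := Nat.pos_of_mul_pos_left ((Nat.zero_le v).trans_lt hv)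
  have hmod := add_one_mod_of_mod_add_one_lt (mod_add_one_lt_of_not_isBlockEnd hP h)
  by_contra hge
  rw [show v + 1 = K * (N1 + N2) by omega, Nat.mul_mod_left] at hmod
  omega

lemma card_isBlockEnd_le (K N1 N2 : ℕ) :
    ((Finset.range (K * (N1 + N2))).filter (IsBlockEnd N1 N2)).card ≤ 2 * K := by
  have hfirst := card_filter_mod_eq_le K (N1 + N2) (N1 - 1)
  have hsecond := card_filter_mod_eq_le K (N1 + N2) (N1 + N2 - 1)
  refine (Finset.card_le_card ?_).trans
    ((Finset.card_union_le _ _).trans (two_mul K ▸ add_le_add hfirst hsecond))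
  intro v hv
  simp only [IsBlockEnd, Finset.mem_filter, Finset.mem_union, Finset.mem_range] at hv ⊢
  omega

/-- Each node `v` that is not the last of its block is the lower end of the edge `{v, v+1}`. -/
lemma card_not_isBlockEnd_le_numEdges (K N1 N2 : ℕ) :
    ((Finset.range (K * (N1 + N2))).filter (fun v => ¬ IsBlockEnd N1 N2 v)).card ≤
      numEdges (graphG K N1 N2) := by
  rcases Nat.eq_zero_or_pos (K * (N1 + N2)) with hn | hn
  · simp [hn]
  have : NeZero (K * (N1 + N2)) := ⟨hn.ne'⟩
  have hP : 0 < N1 + N2 := Nat.pos_of_mul_pos_left hn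
  have hval : ∀ w < K * (N1 + N2), (Fin.ofNat (K * (N1 + N2)) w).val = w :=
    fun w hw => by rw [Fin.val_ofNat, Nat.mod_eq_of_lt hw]
  refine Finset.card_le_card_of_injOn (fun v => s(Fin.ofNat _ v, Fin.ofNat _ (v + 1))) ?_ ?_
  · intro v hv
    simp only [Finset.coe_filter, Finset.mem_range, Set.mem_ofPred_eq] at hv
    have hv1 := add_one_lt_of_not_isBlockEnd hv.1 hv.2
    simp only [edgeFin, Finset.coe_filter, Finset.mem_univ, true_and, Set.mem_ofPred_eq,
      SimpleGraph.mem_edgeSet]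
    refine ⟨Or.inl ?_, ?_⟩
    · rw [hval v hv.1, hval _ hv1]
    · rw [hval v hv.1, hval _ hv1, blockIdx_add_one_of_not_isBlockEnd hP hv.2]
  · intro a ha b hb hab
    simp only [Finset.coe_filter, Finset.mem_range, Set.mem_ofPred_eq] at ha hb
    have ha1 := add_one_lt_of_not_isBlockEnd ha.1 ha.2
    have hb1 := add_one_lt_of_not_isBlockEnd hb.1 hb.2
    rcases Sym2.eq_iff.mp hab with ⟨h, -⟩ | ⟨h, h'⟩
    · have e := congrArg Fin.val h
      rwa [hval a ha.1, hval b hb.1] at e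
    · have e := congrArg Fin.val h
      have e' := congrArg Fin.val h'
      rw [hval a ha.1, hval _ hb1] at e
      rw [hval b hb.1, hval _ ha1] at e'
      omega

lemma numEdges_graphG_ge (K N1 N2 : ℕ) :
    K * (N1 + N2) ≤ numEdges (graphG K N1 N2) + 2 * K := by
  have hsplit := Finset.card_filter_add_card_filter_not
    (s := Finset.range (K * (N1 + N2))) (p := IsBlockEnd N1 N2)
  rw [Finset.card_range] at hsplit
  have := card_isBlockEnd_le K N1 N2
  have := card_not_isBlockEnd_le_numEdges K N1 N2
  omega

end PathBlocks

lemma one_sub_le_QN_uLabel {n J : ℕ} {G : SimpleGraph (Fin n)}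
    (hG : G ≤ SimpleGraph.pathGraph n) (hm : numEdges G ≠ 0) (hrem : n % J ≤ n / J) :
    1 - (J : ℝ) / numEdges G - ((n / J : ℕ) : ℝ) / numEdges G ≤ QN G (uLabel J) := by
  have hD : ∀ k, clusterDeg G (uLabel J) k ≤ 2 * (n / J) := fun k =>
    (clusterDeg_le_of_le_pathGraph hG _ k).trans
      (Nat.mul_le_mul_left 2 (card_uLabel_fiber_le hrem k))
  have h := one_sub_le_QN G _ hm
    (extraEdges_le_of_le_pathGraph hG (uLabel_monotone J) (uLabel_le J)) hD
  rwa [Nat.cast_mul, Nat.cast_ofNat, mul_div_mul_left _ _ two_ne_zero] at h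

def modularityLowerBound (K x : ℝ) : ℝ :=
  1 - x / (1 + x ^ 2 * K) - 2 * (3 + x ^ 2 * K) ^ 2 / ((1 + x ^ 2 * K) ^ 2 * x * K)

lemma modularityLowerBound_le {x K m L : ℝ} (hx : 0 < x) (hK : 0 < K)
    (hm : K * (1 + x ^ 2 * K) ≤ m) (hL : x * L ≤ 3 + x ^ 2 * K) :
    modularityLowerBound K x ≤ 1 - x * K / m - L / m := by
  unfold modularityLowerBound
  set A := 1 + x ^ 2 * K
  set B := 3 + x ^ 2 * K
  have hA : 0 < A := by positivity
  have hAB : A ≤ 2 * B := by simp only [A, B]; nlinarith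
  have hmpos : 0 < m := (mul_pos hK hA).trans_le hm
  have hJ : x * K / m ≤ x / A := by
    rw [div_le_div_iff₀ hmpos hA]
    nlinarith
  have hL' : L / m ≤ 2 * B ^ 2 / (A ^ 2 * x * K) := by
    rw [div_le_div_iff₀ hmpos (by positivity)]
    calc L * (A ^ 2 * x * K) = (x * L) * (A * K) * A := by ring
      _ ≤ B * (A * K) * (2 * B) := by gcongr
      _ = 2 * B ^ 2 * (K * A) := by ring
      _ ≤ 2 * B ^ 2 * m := by gcongr
  linarith

lemma one_sub_div_le_modularityLowerBound {x K : ℝ} (hx : 1 ≤ x) (hK : 1 ≤ K) :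
    1 - 19 / x ≤ modularityLowerBound K x := by
  unfold modularityLowerBound
  set t := x ^ 2 * K
  have ht : x ^ 2 ≤ t := le_mul_of_one_le_right (sq_nonneg x) hK
  have h1 : x / (1 + t) ≤ 1 / x := by
    rw [div_le_div_iff₀ (by positivity) (by positivity)]
    nlinarith
  have h2 : 2 * (3 + t) ^ 2 / ((1 + t) ^ 2 * x * K) ≤ 18 / x := by
    rw [div_le_div_iff₀ (by positivity) (by positivity)]
    have h3 : (3 + t) ^ 2 ≤ 9 * (1 + t) ^ 2 := by nlinarith
    have h4 : (1 + t) ^ 2 * x ≤ (1 + t) ^ 2 * x * K :=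
      le_mul_of_one_le_right (by positivity) hK
    nlinarith
  have h19 : 1 / x + 18 / x = 19 / x := by ring
  linarith

lemma QN_graphG_uLabel_ge (K x : ℕ) (hK : 1 ≤ K) (hx : 1 ≤ x) :
    modularityLowerBound K x ≤ QN (graphG K 3 (x ^ 2 * K)) (uLabel (x * K)) := by
  set m := numEdges (graphG K 3 (x ^ 2 * K))
  set L := K * (3 + x ^ 2 * K) / (x * K)
  have hJ : 0 < x * K := Nat.mul_pos hx hK
  have hJL : x * K ≤ L := by
    rw [Nat.le_div_iff_mul_le hJ]
    nlinarith
  have hrem : K * (3 + x ^ 2 * K) % (x * K) ≤ L := ((Nat.mod_lt _ hJ).trans_le hJL).le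
  have hm : K * (1 + x ^ 2 * K) ≤ m := by
    have := numEdges_graphG_ge K 3 (x ^ 2 * K)
    nlinarith
  have hxL : x * L ≤ 3 + x ^ 2 * K := by
    refine Nat.le_of_mul_le_mul_left ?_ (show 0 < K by omega)
    calc K * (x * L) = L * (x * K) := by ring
      _ ≤ K * (3 + x ^ 2 * K) := Nat.div_mul_le_self _ _
  have hQN : 1 - ((x * K : ℕ) : ℝ) / m - (L : ℝ) / m ≤
      QN (graphG K 3 (x ^ 2 * K)) (uLabel (x * K)) :=
    one_sub_le_QN_uLabel (graphG_le_pathGraph K 3 (x ^ 2 * K)) (by nlinarith) hrem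
  have hmR : (K : ℝ) * (1 + (x : ℝ) ^ 2 * K) ≤ m := by exact_mod_cast hm
  have hxLR : (x : ℝ) * L ≤ 3 + (x : ℝ) ^ 2 * K := by exact_mod_cast hxL
  push_cast at hQN
  linarith [modularityLowerBound_le (by positivity) (by positivity) hmR hxLR]

end BadComm

open BadComm Filter

/-- with `N₁ = 3`, `J = xK`, `N₂ = x²K`,
`Q_N(𝐔_{K,3,x²K,xK}, G_{K,3,x²K}) ≥ 1 − x/(1+x²K) − 2(3+x²K)²/((1+x²K)²xK)`,
and the modularity tends to `1` as `x → ∞`. -/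
theorem statement12 (K : ℕ) (hK : 1 ≤ K) :
    (∀ x : ℕ, 1 ≤ x →
      QN (graphG K 3 (x ^ 2 * K)) (uLabel (x * K)) ≥
        1 - (x : ℝ) / (1 + (x : ℝ) ^ 2 * (K : ℝ))
          - 2 * (3 + (x : ℝ) ^ 2 * (K : ℝ)) ^ 2 /
              ((1 + (x : ℝ) ^ 2 * (K : ℝ)) ^ 2 * (x : ℝ) * (K : ℝ))) ∧
    Tendsto (fun x : ℕ => QN (graphG K 3 (x ^ 2 * K)) (uLabel (x * K)))
      atTop (nhds 1) := by
  refine ⟨fun x hx => QN_graphG_uLabel_ge K x hK hx, ?_⟩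
  have hlim : Tendsto (fun x : ℕ => 1 - 19 / (x : ℝ)) atTop (nhds 1) := by
    simpa using tendsto_const_nhds.sub
      (tendsto_const_nhds.div_atTop tendsto_natCast_atTop_atTop :
        Tendsto (fun x : ℕ => 19 / (x : ℝ)) atTop (nhds 0))
  refine tendsto_of_tendsto_of_tendsto_of_le_of_le' hlim tendsto_const_nhds ?_
    (Eventually.of_forall fun x => QN_le_one _ _)
  filter_upwards [eventually_ge_atTop 1] with x hx
  exact (one_sub_div_le_modularityLowerBound (by exact_mod_cast hx) (by exact_mod_cast hK)).trans
    (QN_graphG_uLabel_ge K x hK hx)
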